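/- An interaction simplicial map f = {f_i} : {K_i} → {L_i} (simplicial maps with f_i(σ_i) = f_j(σ_j) iff σ_i = σ_j on simplices) induces a morphism of interaction spaces on geometric realizations, i.e., the induced continuous maps satisfy f_i(x) = f_j(y) for points x in |K_i|, y in |K_j| if and only if x = y; conversely, a family of simplicial maps that is a morphism of interaction spaces on realizations is an interaction simplicial map. -/
import Mathlib


/-- An abstract simplicial complex on a vertex set `V`. -/
structure ASC (V : Type) where
  faces : Set (Finset V)
  nonempty_of_mem : ∀ s ∈ faces, s.Nonempty
  down_closed : ∀ s ∈ faces, ∀ t, t ⊆ s → t.Nonempty → t ∈ faces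

open Classical in
/-- The geometric realization of a simplicial complex on a finite vertex set:
barycentric coordinate functions supported on a face. -/
noncomputable def RealASC {V : Type} [Fintype V] (K : ASC V) : Set (V → ℝ) :=
  {w | (∀ a, 0 ≤ w a) ∧ (∑ a, w a = 1) ∧
    (Finset.univ.filter fun a => w a ≠ 0) ∈ K.faces}

open Classical in
/-- The affine map on geometric realizations induced by a vertex map `φ`:
the pushforward of barycentric coordinates. -/
noncomputable def pushMap {V W : Type} [Fintype V] (φ : V → W) (w : V → ℝ) : W → ℝ :=
  fun b => ∑ a ∈ Finset.univ.filter (fun a => φ a = b), w a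

open Classical

section Aux
variable {V W : Type} [Fintype V] [Fintype W] [DecidableEq W]

lemma pushMap_def (φ : V → W) (w : V → ℝ) (b : W) :
    pushMap φ w b = ∑ a ∈ Finset.univ.filter (fun a => φ a = b), w a := by
  unfold pushMap
  congr 1
  exact Finset.filter_congr_decidable _ _ _

lemma pushMap_eq_zero_iff (φ : V → W) {u : V → ℝ} (hu : ∀ a, 0 ≤ u a) (b : W) :
    pushMap φ u b = 0 ↔ ∀ a, φ a = b → u a = 0 := by
  rw [pushMap_def, Finset.sum_eq_zero_iff_of_nonneg (fun a _ => hu a)]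
  simp [Finset.mem_filter]

lemma support_pushMap (φ : V → W) {u : V → ℝ} (hu : ∀ a, 0 ≤ u a) :
    (Finset.univ.filter fun b => pushMap φ u b ≠ 0)
      = (Finset.univ.filter fun a => u a ≠ 0).image φ := by
  ext b
  simp only [Finset.mem_filter, Finset.mem_image, Finset.mem_univ, true_and]
  rw [Ne, pushMap_eq_zero_iff φ hu b]
  push_neg
  constructor
  · rintro ⟨a, ha, h0⟩; exact ⟨a, h0, ha⟩
  · rintro ⟨a, h0, ha⟩; exact ⟨a, ha, h0⟩

lemma sum_pushMap (φ : V → W) (u : V → ℝ) :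
    ∑ b, pushMap φ u b = ∑ a, u a := by
  rw [Finset.sum_congr rfl (fun b _ => pushMap_def φ u b)]
  exact Finset.sum_fiberwise_of_maps_to (fun a _ => Finset.mem_univ (φ a)) u

lemma pushMap_apply_of_inj (φ : V → W) (u : V → ℝ) (a : V)
    (h : ∀ a', u a' ≠ 0 → φ a' = φ a → a' = a) :
    pushMap φ u (φ a) = u a := by
  rw [pushMap_def]
  apply Finset.sum_eq_single_of_mem
  · simp
  · intro b hb hba
    by_contra hb0
    exact hba (h b hb0 (by simpa using hb))

lemma pushMap_congr (φ ψ : V → W) (u : V → ℝ) (h : ∀ a, u a ≠ 0 → φ a = ψ a) :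
    pushMap φ u = pushMap ψ u := by
  funext b
  rw [pushMap_def, pushMap_def, Finset.sum_filter, Finset.sum_filter]
  refine Finset.sum_congr rfl fun a _ => ?_
  by_cases h0 : u a = 0
  · by_cases h1 : φ a = b <;> by_cases h2 : ψ a = b <;> simp [h0, h1, h2]
  · rw [h a h0]

/-- The "barycenter" point of a face `s`, weighted so that its pushforward
along `φ` is the barycenter of `s.image φ`. -/
noncomputable def bary (φ : V → W) (s : Finset V) : V → ℝ := fun a =>
  if a ∈ s then ((s.image φ).card : ℝ)⁻¹ * ((s.filter fun a' => φ a' = φ a).card : ℝ)⁻¹ else 0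

lemma bary_pos (φ : V → W) (s : Finset V) {a : V} (ha : a ∈ s) : 0 < bary φ s a := by
  unfold bary
  rw [if_pos ha]
  have h1 : 0 < ((s.image φ).card : ℝ) := by
    exact_mod_cast Finset.card_pos.2 ((Finset.image_nonempty).2 ⟨a, ha⟩)
  have h2 : 0 < ((s.filter fun a' => φ a' = φ a).card : ℝ) := by
    have : 0 < (s.filter fun a' => φ a' = φ a).card :=
      Finset.card_pos.2 ⟨a, Finset.mem_filter.2 ⟨ha, rfl⟩⟩
    exact_mod_cast this
  positivity

lemma bary_nonneg (φ : V → W) (s : Finset V) (a : V) : 0 ≤ bary φ s a := by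
  by_cases h : a ∈ s
  · exact le_of_lt (bary_pos φ s h)
  · unfold bary; rw [if_neg h]
  
lemma bary_ne_zero_iff (φ : V → W) (s : Finset V) (a : V) :
    bary φ s a ≠ 0 ↔ a ∈ s := by
  constructor
  · intro h
    by_contra ha
    exact h (by unfold bary; rw [if_neg ha])
  · intro ha
    exact ne_of_gt (bary_pos φ s ha)

lemma pushMap_bary (φ : V → W) (s : Finset V) (b : W) :
    pushMap φ (bary φ s) b
      = if b ∈ s.image φ then ((s.image φ).card : ℝ)⁻¹ else 0 := by
  rw [pushMap_def]
  have hsub : ∑ a ∈ s.filter (fun a => φ a = b), bary φ s a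
      = ∑ a ∈ Finset.univ.filter (fun a => φ a = b), bary φ s a := by
    apply Finset.sum_subset
    · intro x hx
      simp only [Finset.mem_filter] at hx ⊢
      exact ⟨Finset.mem_univ x, hx.2⟩
    · intro x hx hxs
      simp only [Finset.mem_filter, Finset.mem_univ, true_and] at hx hxs
      have : x ∉ s := fun hxmem => hxs ⟨hxmem, hx⟩
      unfold bary; rw [if_neg this]
  rw [← hsub]
  by_cases hb : b ∈ s.image φ
  · rw [if_pos hb]
    have hcongr : ∀ a ∈ s.filter fun a => φ a = b,
        bary φ s a = ((s.image φ).card : ℝ)⁻¹ * (((s.filter fun a => φ a = b).card : ℝ))⁻¹ := by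
      intro a ha
      rw [Finset.mem_filter] at ha
      have hset : (s.filter fun a' => φ a' = φ a) = s.filter fun a' => φ a' = b :=
        Finset.filter_congr fun x _ => by rw [ha.2]
      unfold bary
      rw [if_pos ha.1, hset]
    rw [Finset.sum_congr rfl hcongr, Finset.sum_const, nsmul_eq_mul]
    have hm0 : (s.filter fun a => φ a = b).card ≠ 0 := by
      obtain ⟨a, ha, rfl⟩ := Finset.mem_image.1 hb
      have hne : (s.filter fun a' => φ a' = φ a).Nonempty := ⟨a, Finset.mem_filter.2 ⟨ha, rfl⟩⟩
      exact Finset.card_ne_zero.2 hne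
    have hm : ((s.filter fun a => φ a = b).card : ℝ) ≠ 0 := Nat.cast_ne_zero.2 hm0
    rw [mul_comm (((s.image φ).card : ℝ))⁻¹, ← mul_assoc, mul_inv_cancel₀ hm, one_mul]
  · rw [if_neg hb]
    have : s.filter (fun a => φ a = b) = ∅ := by
      rw [Finset.filter_eq_empty_iff]
      intro a ha he
      exact hb (Finset.mem_image.2 ⟨a, ha, he⟩)
    rw [this, Finset.sum_empty]

lemma sum_bary (φ : V → W) (s : Finset V) (hs : s.Nonempty) :
    ∑ a, bary φ s a = 1 := by
  rw [← sum_pushMap φ (bary φ s)]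
  rw [Finset.sum_congr rfl (fun b _ => pushMap_bary φ s b), Finset.sum_ite_mem,
    Finset.univ_inter, Finset.sum_const, nsmul_eq_mul]
  have : ((s.image φ).card : ℝ) ≠ 0 := by
    exact_mod_cast Finset.card_ne_zero.2 (Finset.image_nonempty.2 hs)
  field_simp

end Aux

section Aux2
set_option linter.unusedSectionVars false
variable {V W : Type} [Fintype V] [Fintype W] [DecidableEq W]

lemma pushMap_delta (φ : V → W) (a : V) :
    pushMap φ (fun a' => if a' = a then (1:ℝ) else 0)
      = fun b => if b = φ a then 1 else 0 := by
  funext b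
  rw [pushMap_def]
  rw [Finset.sum_ite_eq' (Finset.univ.filter fun a' => φ a' = b) a (fun _ => (1:ℝ))]
  simp only [Finset.mem_filter, Finset.mem_univ, true_and]
  by_cases h : φ a = b
  · simp [h]
  · rw [if_neg h, if_neg (fun hb : b = φ a => h hb.symm)]

lemma delta_mem_RealASC (K : ASC V) (a : V) (h : {a} ∈ K.faces) :
    (fun a' => if a' = a then (1:ℝ) else 0) ∈ RealASC K := by
  refine ⟨fun a' => ?_, ?_, ?_⟩
  · by_cases ha : a' = a <;> simp [ha]
  · rw [Finset.sum_ite_eq' Finset.univ a (fun _ => (1:ℝ))]; simp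
  · convert h using 2
    ext x
    simp only [Finset.mem_filter, Finset.mem_univ, true_and, Finset.mem_singleton]
    by_cases hx : x = a <;> simp [hx]

lemma bary_mem_RealASC (K : ASC V) (φ : V → W) (s : Finset V) (hs : s ∈ K.faces) :
    bary φ s ∈ RealASC K := by
  refine ⟨bary_nonneg φ s, sum_bary φ s (K.nonempty_of_mem s hs), ?_⟩
  convert hs using 2
  ext x
  simp only [Finset.mem_filter, Finset.mem_univ, true_and]
  exact bary_ne_zero_iff φ s x

end Aux2

section Aux3
set_option linter.unusedSectionVars false
variable {V W : Type} [Fintype V] [Fintype W] [DecidableEq W]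

lemma mem_RealASC_iff (K : ASC V) (w : V → ℝ) :
    w ∈ RealASC K ↔ (∀ a, 0 ≤ w a) ∧ (∑ a, w a = 1) ∧
      (Finset.univ.filter fun a => w a ≠ 0) ∈ K.faces := by
  unfold RealASC
  rw [Set.mem_setOf_eq, Finset.filter_congr_decidable]

end Aux3

/-- for interaction simplicial complexes `{Kᵢ}`, `{Lᵢ}` and a
family of simplicial maps `φᵢ` (vertex maps carrying faces of `Kᵢ` to faces of
`Lᵢ`), the family is an interaction simplicial map (i.e. `fᵢ(σᵢ) = fⱼ(σⱼ)` iff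
`σᵢ = σⱼ` on simplices) if and only if the induced continuous maps on
geometric realizations form a morphism of interaction spaces (i.e.
`fᵢ(x) = fⱼ(y)` iff `x = y` for points of the realizations). -/
theorem stmt18 {n : ℕ} {V W : Type} [Fintype V] [Fintype W] [DecidableEq W]
    (K : Fin n → ASC V) (L : Fin n → ASC W) (φ : Fin n → V → W)
    (hφ : ∀ i, ∀ s ∈ (K i).faces, s.image (φ i) ∈ (L i).faces) :
    (∀ i j, i ≠ j → ∀ s ∈ (K i).faces, ∀ t ∈ (K j).faces,
        (s.image (φ i) = t.image (φ j) ↔ s = t))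
    ↔ (∀ i j, i ≠ j → ∀ u ∈ RealASC (K i), ∀ v ∈ RealASC (K j),
        (pushMap (φ i) u = pushMap (φ j) v ↔ u = v)) := by
  constructor
  · -- simplicial ⇒ geometric
    intro H i j hij u hu v hv
    obtain ⟨hu0, hu1, hus⟩ := (mem_RealASC_iff (K i) u).1 hu
    obtain ⟨hv0, hv1, hvs⟩ := (mem_RealASC_iff (K j) v).1 hv
    constructor
    · intro hpush
      have himg : (Finset.univ.filter fun a => u a ≠ 0).image (φ i)
          = (Finset.univ.filter fun a => v a ≠ 0).image (φ j) := by
        rw [← support_pushMap (φ i) hu0, ← support_pushMap (φ j) hv0, hpush]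
      have hst := (H i j hij _ hus _ hvs).1 himg
      have hmem_u : ∀ a, u a ≠ 0 → a ∈ Finset.univ.filter fun a => u a ≠ 0 :=
        fun a h => Finset.mem_filter.2 ⟨Finset.mem_univ a, h⟩
      have hvert : ∀ a ∈ (Finset.univ.filter fun a => u a ≠ 0), φ i a = φ j a := by
        intro a ha
        have h1 : ({a} : Finset V) ∈ (K i).faces :=
          (K i).down_closed _ hus {a} (Finset.singleton_subset_iff.2 ha)
            (Finset.singleton_nonempty a)
        have h2 : ({a} : Finset V) ∈ (K j).faces :=
          (K j).down_closed _ hvs {a} (Finset.singleton_subset_iff.2 (hst ▸ ha))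
            (Finset.singleton_nonempty a)
        have h3 := (H i j hij _ h1 _ h2).2 rfl
        rw [Finset.image_singleton, Finset.image_singleton] at h3
        exact Finset.singleton_injective h3
      have hinj : ∀ a ∈ (Finset.univ.filter fun a => u a ≠ 0),
          ∀ a' ∈ (Finset.univ.filter fun a => u a ≠ 0), φ i a' = φ i a → a' = a := by
        intro a ha a' ha' he
        by_contra hne
        have hamem : a ∈ (Finset.univ.filter fun a => u a ≠ 0).erase a' :=
          Finset.mem_erase.2 ⟨fun h => hne h.symm, ha⟩
        have hσ : (Finset.univ.filter fun a => u a ≠ 0).erase a' ∈ (K i).faces :=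
          (K i).down_closed _ hus _ (Finset.erase_subset _ _) ⟨a, hamem⟩
        have h1img : ((Finset.univ.filter fun a => u a ≠ 0).erase a').image (φ i)
            = (Finset.univ.filter fun a => u a ≠ 0).image (φ i) := by
          apply Finset.Subset.antisymm (Finset.image_subset_image (Finset.erase_subset _ _))
          intro x hx
          obtain ⟨c, hc, rfl⟩ := Finset.mem_image.1 hx
          by_cases hca : c = a'
          · subst hca
            exact Finset.mem_image.2 ⟨a, hamem, he.symm⟩
          · exact Finset.mem_image.2 ⟨c, Finset.mem_erase.2 ⟨hca, hc⟩, rfl⟩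
        have h4 := (H i j hij _ hσ _ hvs).1 (h1img.trans himg)
        have ha'2 : a' ∈ (Finset.univ.filter fun a => u a ≠ 0).erase a' := by
          rw [h4, ← hst]; exact ha'
        exact Finset.notMem_erase a' _ ha'2
      funext a
      by_cases ha : u a = 0
      · have hat : a ∉ Finset.univ.filter fun a' => v a' ≠ 0 := by
          rw [← hst]; simp [ha]
        rw [Finset.mem_filter, not_and, not_not] at hat
        rw [ha, hat (Finset.mem_univ a)]
      · have hafilter := hmem_u a ha
        have h1 : pushMap (φ i) u (φ i a) = u a :=
          pushMap_apply_of_inj (φ i) u a (fun a' h0 he => hinj a hafilter a' (hmem_u a' h0) he)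
        have h2 : pushMap (φ j) v (φ j a) = v a := by
          apply pushMap_apply_of_inj
          intro a' h0 he
          have ha'v : a' ∈ Finset.univ.filter fun a' => v a' ≠ 0 :=
            Finset.mem_filter.2 ⟨Finset.mem_univ _, h0⟩
          have ha'u : a' ∈ Finset.univ.filter fun a' => u a' ≠ 0 := by rw [hst]; exact ha'v
          apply hinj a hafilter a' ha'u
          rw [hvert a' ha'u, hvert a hafilter]
          exact he
        calc u a = pushMap (φ i) u (φ i a) := h1.symm
          _ = pushMap (φ j) v (φ i a) := by rw [hpush]
          _ = pushMap (φ j) v (φ j a) := by rw [hvert a hafilter]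
          _ = v a := h2
    · intro huv
      subst huv
      apply pushMap_congr
      intro a ha
      have hamem : a ∈ Finset.univ.filter fun a' => u a' ≠ 0 :=
        Finset.mem_filter.2 ⟨Finset.mem_univ _, ha⟩
      have h1 : ({a} : Finset V) ∈ (K i).faces :=
        (K i).down_closed _ hus {a} (Finset.singleton_subset_iff.2 hamem)
          (Finset.singleton_nonempty a)
      have h2 : ({a} : Finset V) ∈ (K j).faces :=
        (K j).down_closed _ hvs {a} (Finset.singleton_subset_iff.2 hamem)
          (Finset.singleton_nonempty a)
      have h3 := (H i j hij _ h1 _ h2).2 rfl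
      rw [Finset.image_singleton, Finset.image_singleton] at h3
      exact Finset.singleton_injective h3
  · -- geometric ⇒ simplicial
    intro H i j hij s hs t ht
    constructor
    · intro himg
      have hpush : pushMap (φ i) (bary (φ i) s) = pushMap (φ j) (bary (φ j) t) := by
        funext b
        rw [pushMap_bary, pushMap_bary, himg]
      have heq := (H i j hij _ (bary_mem_RealASC (K i) (φ i) s hs)
        _ (bary_mem_RealASC (K j) (φ j) t ht)).1 hpush
      ext a
      rw [← bary_ne_zero_iff (φ i) s a, ← bary_ne_zero_iff (φ j) t a, heq]
    · intro hst
      subst hst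
      apply Finset.image_congr
      intro a ha
      have ha' : a ∈ s := ha
      have h1 : ({a} : Finset V) ∈ (K i).faces :=
        (K i).down_closed _ hs {a} (Finset.singleton_subset_iff.2 ha')
          (Finset.singleton_nonempty a)
      have h2 : ({a} : Finset V) ∈ (K j).faces :=
        (K j).down_closed _ ht {a} (Finset.singleton_subset_iff.2 ha')
          (Finset.singleton_nonempty a)
      have hd := (H i j hij _ (delta_mem_RealASC (K i) a h1)
        _ (delta_mem_RealASC (K j) a h2)).2 rfl
      rw [pushMap_delta, pushMap_delta] at hd
      have hda := congrFun hd (φ i a)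
      by_contra hne
      rw [if_pos rfl, if_neg (fun h : φ i a = φ j a => hne h)] at hda
      exact one_ne_zero hda
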